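/- If tournament (S,P) is not manipulable by any team, then the tournament system W = [(S,P),(T,Q),(U,R)] with allocation rule 𝒜″ is incentive compatible, even if tournament (T,Q) is manipulable in the sense of Definition 2. -/

import Mathlib

/-- A tournament system `W = [(S,P),(T,Q),(U,R)]` in the sense of the paper:
ranking methods `P`, `Q`, `R` assign natural-number ranks to teams for any set of
results; `worseS i s s'` (resp. `worseT`) means that results `s'` coincide with `s`
except for a strictly worse performance by team `i`.  The winner `p` of `(S,P)`
also plays in `(T,Q)` but not in `(U,R)`; the winner `r` of `(U,R)` does not play
in `(T,Q)`.  The top `q` teams of `(T,Q)` receive direct slots. -/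
structure System (Team ResS ResT ResU : Type) : Type where
  P : ResS → Team → ℕ
  Q : ResT → Team → ℕ
  R : ResU → Team → ℕ
  worseS : Team → ResS → ResS → Prop
  worseT : Team → ResT → ResT → Prop
  teamsS : Set Team
  teamsT : Set Team
  teamsU : Set Team
  S : ResS
  T : ResT
  U : ResU
  q : ℕ
  p : Team
  r : Team
  hp_win : P S p = 1
  hp_T : p ∈ teamsT
  hp_notU : p ∉ teamsU
  hr_win : R U r = 1
  hr_U : r ∈ teamsU
  hr_notT : r ∉ teamsT

namespace System

variable {Team ResS ResT ResU : Type} (W : System Team ResS ResT ResU)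

/-- The ranking methods are linear orders on the participants. -/
def linearRanked : Prop :=
  (∀ s, Set.InjOn (W.P s) W.teamsS) ∧ (∀ t, Set.InjOn (W.Q t) W.teamsT)

/-- The current UEFA allocation rule `𝒜`: the top `q` of `(T,Q)` qualify; moreover,
if the winner `w` of `(S,P)` has `Q_w(T) ≥ q+1` it qualifies itself; if
`Q_w(T) ≤ q−1` the vacancy goes to `r`; if `Q_w(T) = q` it goes to the
`(q+1)`-th ranked team of `(T,Q)`. -/
def qualA (s : ResS) (t : ResT) : Set Team :=
  {i | (i ∈ W.teamsT ∧ W.Q t i ≤ W.q) ∨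
    ∃ w, W.P s w = 1 ∧
      ((W.q + 1 ≤ W.Q t w ∧ i = w) ∨
       (W.Q t w + 1 ≤ W.q ∧ i = W.r) ∨
       (W.Q t w = W.q ∧ i ∈ W.teamsT ∧ W.Q t i = W.q + 1))}

/-- The modified rule `𝒜′`: all cases `Q_w(T) ≤ q` are treated uniformly, the
vacancy going to `r`. -/
def qualA' (s : ResS) (t : ResT) : Set Team :=
  {i | (i ∈ W.teamsT ∧ W.Q t i ≤ W.q) ∨
    ∃ w, W.P s w = 1 ∧
      ((W.q + 1 ≤ W.Q t w ∧ i = w) ∨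
       (W.Q t w ≤ W.q ∧ i = W.r))}

/-- The modified rule `𝒜″`: any vacancy created by the winner of `(S,P)` is filled
by the `(q+1)`-th ranked team of `(T,Q)`. -/
def qualA'' (s : ResS) (t : ResT) : Set Team :=
  {i | (i ∈ W.teamsT ∧ W.Q t i ≤ W.q) ∨
    ∃ w, W.P s w = 1 ∧
      ((W.q + 1 ≤ W.Q t w ∧ i = w) ∨
       (W.Q t w ≤ W.q ∧ i ∈ W.teamsT ∧ W.Q t i = W.q + 1))}

/-- Definition 1: tournament `(S,P)` is manipulable by team `i`, making team `j`
the winner: some worse performance `s'` of `i` keeps `i`'s rank and promotes `j`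
(originally ranked at least 2) to rank 1. -/
def manipSBy (i j : Team) : Prop :=
  ∃ s', W.worseS i W.S s' ∧ W.P W.S i = W.P s' i ∧
    2 ≤ W.P W.S j ∧ W.P s' j = 1

/-- A witness `t'` of a Definition-2 manipulation of `(T,Q)` by team `i` (ranked
`q+1` before and after), swapping teams `j` (rank `q−1 → q`) and `k`
(rank `q → q−1`), all other ranks unchanged. -/
def manipTWitness (i j k : Team) (t' : ResT) : Prop :=
  W.worseT i W.T t' ∧
  W.Q W.T i = W.q + 1 ∧ W.Q t' i = W.q + 1 ∧
  W.Q W.T j + 1 = W.q ∧ W.Q t' j = W.q ∧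
  W.Q W.T k = W.q ∧ W.Q t' k + 1 = W.q ∧
  (∀ m, m ≠ j → m ≠ k → W.Q W.T m = W.Q t' m)

/-- Definition 2: tournament `(T,Q)` is manipulable by team `i`, swapping `j` and `k`. -/
def manipTBy (i j k : Team) : Prop := ∃ t', W.manipTWitness i j k t'

/-- Some team gains a qualification slot it would not otherwise obtain via a
Definition-1 manipulation of `(S,P)`. -/
def incompatibleS (qual : ResS → ResT → Set Team) : Prop :=
  ∃ i j s', W.worseS i W.S s' ∧ W.P W.S i = W.P s' i ∧
    2 ≤ W.P W.S j ∧ W.P s' j = 1 ∧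
    i ∉ qual W.S W.T ∧ i ∈ qual s' W.T

/-- Some team gains a qualification slot it would not otherwise obtain via a
Definition-2 manipulation of `(T,Q)`.  (The ranking of the coefficient-based
tournament `(U,R)` cannot be improved by worse performance, so `(U,R)` is not
manipulable.) -/
def incompatibleT (qual : ResS → ResT → Set Team) : Prop :=
  ∃ i j k t', W.manipTWitness i j k t' ∧
    i ∉ qual W.S W.T ∧ i ∈ qual W.S t'

/-- Incentive incompatibility of the tournament system under allocation rule `qual`:
some team can strictly enlarge its qualification outcome by a worse performance. -/
def incompatible (qual : ResS → ResT → Set Team) : Prop :=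
  W.incompatibleS qual ∨ W.incompatibleT qual

end System

/-! Under `𝒜″` the qualified set depends on the ranking of `(T,Q)` only through the set of
teams ranked at most `q` and the ranks above `q`.  A Definition-2 manipulation only swaps
the teams ranked `q - 1` and `q`, so it cannot change the qualified set, while a gain from
manipulating `(S,P)` needs `(S,P)` to be manipulable. -/

namespace System

variable {Team ResS ResT ResU : Type} (W : System Team ResS ResT ResU)

theorem not_incompatibleS_of_not_manipSBy (hS : ∀ i j, ¬ W.manipSBy i j)
    (qual : ResS → ResT → Set Team) : ¬ W.incompatibleS qual := by
  rintro ⟨i, j, s', hworse, hrank, hj, hj', -, -⟩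
  exact hS i j ⟨s', hworse, hrank, hj, hj'⟩

theorem qualA''_congr {t t' : ResT}
    (h : ∀ m, (W.Q t m ≤ W.q ∧ W.Q t' m ≤ W.q) ∨ W.Q t m = W.Q t' m) (s : ResS) :
    W.qualA'' s t = W.qualA'' s t' := by
  have hle : ∀ m, W.Q t m ≤ W.q ↔ W.Q t' m ≤ W.q := fun m => by rcases h m with h | h <;> omega
  have hgt : ∀ m, W.q < W.Q t m → W.Q t m = W.Q t' m := fun m => by rcases h m with h | h <;> omega
  ext i
  simp only [qualA'', Set.mem_ofPred_eq]
  refine or_congr (and_congr_right fun _ => hle i) (exists_congr fun w => and_congr_right fun _ => ?_)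
  refine or_congr (and_congr_left fun _ => ?_) (and_congr (hle w) (and_congr_right fun _ => ?_))
  · have := hle w; omega
  · have := hle i; have := hgt i; omega

theorem manipTWitness.rank_eq_or_le {i j k : Team} {t' : ResT} (h : W.manipTWitness i j k t')
    (m : Team) : (W.Q W.T m ≤ W.q ∧ W.Q t' m ≤ W.q) ∨ W.Q W.T m = W.Q t' m := by
  obtain ⟨-, -, -, hj, hj', hk, hk', hother⟩ := h
  by_cases hmj : m = j
  · subst hmj; omega
  by_cases hmk : m = k
  · subst hmk; omega
  exact Or.inr (hother m hmj hmk)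

theorem not_incompatibleT_qualA'' : ¬ W.incompatibleT W.qualA'' := by
  rintro ⟨i, j, k, t', hmanip, hnot, hin⟩
  rw [W.qualA''_congr hmanip.rank_eq_or_le] at hnot
  exact hnot hin

end System

theorem statement6_general {Team ResS ResT ResU : Type} (W : System Team ResS ResT ResU)
    (hS : ∀ i j, ¬ W.manipSBy i j) :
    ¬ W.incompatible W.qualA'' := by
  rintro (h | h)
  · exact W.not_incompatibleS_of_not_manipSBy hS _ h
  · exact W.not_incompatibleT_qualA'' h

/-- if `(S,P)` is not manipulable by any team, then the system
with rule `𝒜″` is incentive compatible, even if `(T,Q)` is manipulable in the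
sense of Definition 2 (no hypothesis on `(T,Q)` is needed). -/
theorem statement6 {Team ResS ResT ResU : Type} (W : System Team ResS ResT ResU)
    (hlin : W.linearRanked) (hS : ∀ i j, ¬ W.manipSBy i j) :
    ¬ W.incompatible W.qualA'' :=
  statement6_general W hS
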